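/- arXiv:1701.01494 — 3 statements merged into one kernel-verified Lean document; each statement's English description precedes it below -/
import Mathlib

section
/- Let $m_0 \in \mathbb{N}$ with $m_0 \geq 1$. The number of pairs $(m,n)$ of integers with $m > m_0$ and $n \geq 0$ satisfying $0 < m_0 - |m - 2m_0| - 2n < m - m_0$ equals $m_0(m_0-1)/2$. -/
/-!
Put `k = m - 2m₀`. The conditions say exactly that the level `y = |k| + 2n` is less than `m₀`
and that `k ≥ 1` or `n ≥ 1`. The admissible points of level `y` are the `y` points
`k = y - 2i`, `n = min i (y - i)` with `0 ≤ i < y`, so there are `∑_{y < m₀} y` of them.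
-/

open Finset

namespace Bifurcation

def pairs (m0 : ℕ) : Set (ℤ × ℤ) :=
  {p | (m0 : ℤ) < p.1 ∧ 0 ≤ p.2 ∧
    0 < (m0 : ℤ) - |p.1 - 2 * (m0 : ℤ)| - 2 * p.2 ∧
    (m0 : ℤ) - |p.1 - 2 * (m0 : ℤ)| - 2 * p.2 < p.1 - (m0 : ℤ)}

def triangle (N : ℕ) : Finset (Σ _ : ℕ, ℕ) := (range N).sigma range

theorem mk_mem_triangle {N y i : ℕ} : ⟨y, i⟩ ∈ triangle N ↔ i < y ∧ y < N := by
  simp only [triangle, mem_sigma, mem_range, and_comm]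

theorem card_triangle (N : ℕ) : #(triangle N) = N * (N - 1) / 2 := by
  simp only [triangle, card_sigma, card_range, sum_range_id]

def levelPoint (m0 : ℕ) (q : Σ _ : ℕ, ℕ) : ℤ × ℤ :=
  (2 * m0 + q.1 - 2 * q.2, min (q.2 : ℤ) ((q.1 : ℤ) - q.2))

def levelIndex (m0 : ℕ) (p : ℤ × ℤ) : Σ _ : ℕ, ℕ :=
  ⟨(|p.1 - 2 * m0| + 2 * p.2).toNat, (p.2 + max 0 (2 * m0 - p.1)).toNat⟩

theorem mapsTo_levelPoint (m0 : ℕ) :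
    Set.MapsTo (levelPoint m0) (triangle m0 : Set (Σ _ : ℕ, ℕ)) (pairs m0) := by
  rintro ⟨y, i⟩ hq
  rw [mem_coe, mk_mem_triangle] at hq
  simp only [levelPoint, pairs, Set.mem_ofPred_eq, abs_eq_max_neg]
  omega

theorem mapsTo_levelIndex (m0 : ℕ) :
    Set.MapsTo (levelIndex m0) (pairs m0) (triangle m0 : Set (Σ _ : ℕ, ℕ)) := by
  rintro ⟨m, n⟩ hp
  simp only [pairs, Set.mem_ofPred_eq, abs_eq_max_neg] at hp
  rw [mem_coe, mk_mem_triangle]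
  simp only [levelIndex, abs_eq_max_neg]
  omega

theorem invOn_levelIndex_levelPoint (m0 : ℕ) :
    Set.InvOn (levelIndex m0) (levelPoint m0) (triangle m0) (pairs m0) := by
  constructor
  · rintro ⟨y, i⟩ hq
    rw [mem_coe, mk_mem_triangle] at hq
    simp only [levelIndex, levelPoint, abs_eq_max_neg, Sigma.mk.injEq, heq_eq_eq]
    omega
  · rintro ⟨m, n⟩ hp
    simp only [pairs, Set.mem_ofPred_eq, abs_eq_max_neg] at hp
    simp only [levelIndex, levelPoint, abs_eq_max_neg, Prod.mk.injEq]
    omega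

theorem bijOn_levelPoint (m0 : ℕ) :
    Set.BijOn (levelPoint m0) (triangle m0) (pairs m0) :=
  (invOn_levelIndex_levelPoint m0).bijOn (mapsTo_levelPoint m0) (mapsTo_levelIndex m0)

end Bifurcation

theorem count_bifurcation_points_general (m0 : ℕ) :
    Set.ncard {p : ℤ × ℤ |
        (m0 : ℤ) < p.1 ∧ 0 ≤ p.2 ∧
        0 < (m0 : ℤ) - |p.1 - 2 * (m0 : ℤ)| - 2 * p.2 ∧
        (m0 : ℤ) - |p.1 - 2 * (m0 : ℤ)| - 2 * p.2 < p.1 - (m0 : ℤ)}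
      = m0 * (m0 - 1) / 2 := by
  rw [← Bifurcation.card_triangle, ← Set.ncard_coe_finset]
  exact (Bifurcation.bijOn_levelPoint m0).ncard_eq.symm

/-- The number of pairs `(m,n)` of integers with `m > m₀`, `n ≥ 0` and
`0 < m₀ - |m - 2m₀| - 2n < m - m₀` equals `m₀(m₀-1)/2`. -/
theorem count_bifurcation_points (m0 : ℕ) (hm0 : 1 ≤ m0) :
    Set.ncard {p : ℤ × ℤ |
        (m0 : ℤ) < p.1 ∧ 0 ≤ p.2 ∧
        0 < (m0 : ℤ) - |p.1 - 2 * (m0 : ℤ)| - 2 * p.2 ∧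
        (m0 : ℤ) - |p.1 - 2 * (m0 : ℤ)| - 2 * p.2 < p.1 - (m0 : ℤ)}
      = m0 * (m0 - 1) / 2 :=
  count_bifurcation_points_general m0
end

section
/- For every integer $m_0 \geq 1$, $\int_0^\infty e_{m_0,0}(r)^2\, e_{m_0+1,0}(r)\, e_{m_0-1,0}(r)\, r\, dr = \frac{(2m_0)!}{4^{m_0}\, m_0!\, \sqrt{(m_0-1)!\,(m_0+1)!}}$. -/
open MeasureTheory

/-- The normalized Hermite–Gauss ground state `e_{m,0}(r) = √(2/m!) rᵐ e^{-r²/2}`. -/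
noncomputable def hermiteGauss0 (m : ℕ) (r : ℝ) : ℝ :=
  Real.sqrt (2 / (Nat.factorial m : ℝ)) * r ^ m * Real.exp (-r ^ 2 / 2)

/-!
A product of four ground states is `√(2/a!) √(2/b!) √(2/c!) √(2/d!) r^(a+b+c+d) e^{-2r²}`, so
with the extra factor `r` and `a + b + c + d = 2n` the integral reduces to the odd Gaussian moment
`∫₀^∞ r^(2n+1) e^{-2r²} dr = n!/2^(n+2)`, a value of the Gamma function. For the indices
`m₀, m₀, m₀+1, m₀-1` one has `n = 2m₀`, and the constants collapse to the stated closed form.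
-/

open Real Set Nat

theorem integral_pow_mul_exp_neg_mul_sq_Ioi_odd {b : ℝ} (hb : 0 < b) (n : ℕ) :
    ∫ x in Ioi (0 : ℝ), x ^ (2 * n + 1) * exp (-b * x ^ 2) = n ! / (2 * b ^ (n + 1)) := by
  have := integral_rpow_mul_exp_neg_mul_rpow two_pos
    (neg_one_lt_zero.trans_le (Nat.cast_nonneg (2 * n + 1))) hb
  simp only [rpow_natCast, rpow_two] at this
  rw [this, show ((2 * n + 1 : ℕ) + 1 : ℝ) / 2 = n + 1 by push_cast; ring,
    show -((2 * n + 1 : ℕ) + 1 : ℝ) / 2 = -((n + 1 : ℕ) : ℝ) by push_cast; ring,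
    rpow_neg hb.le, rpow_natCast, Gamma_nat_eq_factorial]
  field_simp

theorem hermiteGauss0_mul_four (a b c d : ℕ) (r : ℝ) :
    hermiteGauss0 a r * hermiteGauss0 b r * hermiteGauss0 c r * hermiteGauss0 d r =
      √(2 / a !) * √(2 / b !) * √(2 / c !) * √(2 / d !) *
        (r ^ (a + b + c + d) * exp (-2 * r ^ 2)) := by
  have hexp : exp (-2 * r ^ 2) =
      exp (-r ^ 2 / 2) * exp (-r ^ 2 / 2) * exp (-r ^ 2 / 2) * exp (-r ^ 2 / 2) := by
    simp only [← exp_add]; ring_nf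
  simp only [hermiteGauss0, hexp, pow_add]
  ring

theorem integral_hermiteGauss0_mul_four {a b c d n : ℕ} (h : a + b + c + d = 2 * n) :
    ∫ r in Ioi (0 : ℝ),
        hermiteGauss0 a r * hermiteGauss0 b r * hermiteGauss0 c r * hermiteGauss0 d r * r =
      √(2 / a !) * √(2 / b !) * √(2 / c !) * √(2 / d !) * (n ! / 2 ^ (n + 2)) := by
  have hintegrand : ∀ r : ℝ, hermiteGauss0 a r * hermiteGauss0 b r * hermiteGauss0 c r *
      hermiteGauss0 d r * r = √(2 / a !) * √(2 / b !) * √(2 / c !) * √(2 / d !) *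
        (r ^ (2 * n + 1) * exp (-2 * r ^ 2)) := fun r => by
    rw [hermiteGauss0_mul_four, h, pow_succ]; ring
  simp_rw [hintegrand]
  rw [integral_const_mul, integral_pow_mul_exp_neg_mul_sq_Ioi_odd two_pos]
  ring

/-- `⟨e_{m₀,0}² e_{m₀+1,0}, e_{m₀-1,0}⟩_{L²_r}
      = (2m₀)!/(4^{m₀} m₀! √((m₀-1)!(m₀+1)!))`. -/
theorem hermiteGauss0_offdiagonal_integral (m0 : ℕ) (hm0 : 1 ≤ m0) :
    ∫ r in Set.Ioi (0 : ℝ),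
        (hermiteGauss0 m0 r) ^ 2 * hermiteGauss0 (m0 + 1) r * hermiteGauss0 (m0 - 1) r * r
      = (Nat.factorial (2 * m0) : ℝ) /
          (4 ^ m0 * (Nat.factorial m0 : ℝ) *
            Real.sqrt ((Nat.factorial (m0 - 1) : ℝ) * (Nat.factorial (m0 + 1) : ℝ))) := by
  simp_rw [sq]
  have hconst : √(2 / m0 !) * √(2 / m0 !) * √(2 / (m0 + 1)!) * √(2 / (m0 - 1)!) =
      4 / (m0 ! * √((m0 - 1)! * (m0 + 1)!)) := by
    rw [mul_self_sqrt (by positivity), mul_assoc, ← sqrt_mul' _ (by positivity),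
      show (2 : ℝ) / (m0 + 1)! * (2 / (m0 - 1)!) = 2 ^ 2 / ((m0 - 1)! * (m0 + 1)!) by ring,
      sqrt_div' _ (by positivity), sqrt_sq zero_le_two]
    ring
  rw [integral_hermiteGauss0_mul_four (n := 2 * m0) (by omega), hconst, pow_add, pow_mul]
  field_simp
  norm_num
end

section
/- Let $m_0 \geq 2$ be an integer and let $m$ be an integer with $2m_0 + 1 \leq m \leq 3m_0 - 1$. Let $\ell \geq 2$ and $k \geq 0$ be integers, and set $j = m_0 + (m - m_0)\ell$. Then $\frac{m_0 - |m - 2m_0|}{m - m_0} \neq \frac{m_0 - |j - 2m_0| - 2k}{j - m_0}$. -/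
/-! The two values have opposite signs. For `2m₀ < m < 3m₀` the left numerator
`m₀ - |m - 2m₀| = 3m₀ - m` is positive, while `ℓ ≥ 2` pushes `j` past `3m₀`, so the right
numerator `3m₀ - j - 2k` is negative; both denominators are positive. -/

theorem div_pos_of_abs_sub_two_mul_lt {m0 m : ℝ} (h : |m - 2 * m0| < m0) :
    0 < (m0 - |m - 2 * m0|) / (m - m0) := by
  have hm : m0 < m := by linarith [neg_abs_le (m - 2 * m0)]
  exact div_pos (by linarith) (by linarith)

theorem div_neg_of_lt_abs_sub_two_mul_add {m0 j k : ℝ} (hj : m0 < j)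
    (h : m0 < |j - 2 * m0| + 2 * k) :
    (m0 - |j - 2 * m0| - 2 * k) / (j - m0) < 0 :=
  div_neg_of_neg_of_pos (by linarith) (by linarith)

theorem two_mul_sub_le_add_sub_mul {m0 m ℓ : ℤ} (hm : m0 ≤ m) (hℓ : 2 ≤ ℓ) :
    2 * m - m0 ≤ m0 + (m - m0) * ℓ := by
  nlinarith

theorem nonresonance_polygon_curves_general (m0 m ℓ k j : ℤ)
    (hml : 2 * m0 + 1 ≤ m) (hmu : m ≤ 3 * m0 - 1)
    (hℓ : 2 ≤ ℓ) (hk : 0 ≤ k) (hj : j = m0 + (m - m0) * ℓ) :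
    ((m0 : ℝ) - |(m : ℝ) - 2 * (m0 : ℝ)|) / ((m : ℝ) - (m0 : ℝ)) ≠
      ((m0 : ℝ) - |(j : ℝ) - 2 * (m0 : ℝ)| - 2 * (k : ℝ)) / ((j : ℝ) - (m0 : ℝ)) := by
  have hj_lower : 3 * m0 + 2 ≤ j := by
    have := two_mul_sub_le_add_sub_mul (by omega : m0 ≤ m) hℓ
    omega
  have hm0 : (0 : ℝ) ≤ m0 := by exact_mod_cast (by omega : 0 ≤ m0)
  have hmlR : 2 * (m0 : ℝ) + 1 ≤ m := by exact_mod_cast hml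
  have hmuR : (m : ℝ) ≤ 3 * m0 - 1 := by exact_mod_cast hmu
  have hjR : 3 * (m0 : ℝ) + 2 ≤ j := by exact_mod_cast hj_lower
  have hkR : (0 : ℝ) ≤ k := by exact_mod_cast hk
  have hm_near : |(m : ℝ) - 2 * m0| < m0 := abs_sub_lt_iff.mpr ⟨by linarith, by linarith⟩
  have hj_far : (m0 : ℝ) < |(j : ℝ) - 2 * m0| + 2 * k := by
    linarith [le_abs_self ((j : ℝ) - 2 * m0)]
  exact ((div_neg_of_lt_abs_sub_two_mul_add (by linarith) hj_far).trans
    (div_pos_of_abs_sub_two_mul_lt hm_near)).ne'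

/-- Non-resonance of the bifurcation curves `Ω_{m,0}` with `2m₀+1 ≤ m ≤ 3m₀-1`
within the fixed-point space of the dihedral group `D_{m-m₀}`: for
`j = m₀ + (m-m₀)ℓ` with `ℓ ≥ 2` and `k ≥ 0`, the leading-order bifurcation
frequencies differ. -/
theorem nonresonance_polygon_curves (m0 m ℓ k j : ℤ)
    (hm0 : 2 ≤ m0) (hml : 2 * m0 + 1 ≤ m) (hmu : m ≤ 3 * m0 - 1)
    (hℓ : 2 ≤ ℓ) (hk : 0 ≤ k) (hj : j = m0 + (m - m0) * ℓ) :
    ((m0 : ℝ) - |(m : ℝ) - 2 * (m0 : ℝ)|) / ((m : ℝ) - (m0 : ℝ)) ≠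
      ((m0 : ℝ) - |(j : ℝ) - 2 * (m0 : ℝ)| - 2 * (k : ℝ)) / ((j : ℝ) - (m0 : ℝ)) :=
  nonresonance_polygon_curves_general m0 m ℓ k j hml hmu hℓ hk hj
end
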